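/- The compatibility conditions between Hamilton's and Heisenberg's equations hold: for each k ∈ {1,2,3}, Σ_{i=1}^{3} [{A_i⁺, A_i⁻}, A_k⁺] = −2 A_k⁺ and Σ_{i=1}^{3} [{A_i⁺, A_i⁻}, A_k⁻] = +2 A_k⁻ (as linear operators on V). -/

import Mathlib

open scoped BigOperators
open Finset

/-- Index set: triples Θ = (θ₁,θ₂,θ₃) with θᵢ ∈ {0,1}. -/
abbrev WIdx := Fin 3 → Fin 2

/-- The 8-dimensional state space V = EuclideanSpace ℂ ({0,1}³). -/
abbrev WV := EuclideanSpace ℂ WIdx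

/-- Orthonormal basis vector e_Θ. -/
noncomputable def eV (Θ : WIdx) : WV := EuclideanSpace.single Θ 1

/-- The basis (e_Θ)_Θ of V, as a `Basis`. -/
noncomputable def bV : Module.Basis WIdx ℂ WV := (EuclideanSpace.basisFun WIdx ℂ).toBasis

/-- q(Θ) = θ₁ + θ₂ + θ₃. -/
def qv (Θ : WIdx) : ℕ := ∑ j, (Θ j : ℕ)

/-- Sign factor (−1)^(θ₁ + ⋯ + θ_{i−1}). -/
def sgnBelow (i : Fin 3) (Θ : WIdx) : ℂ :=
  (-1 : ℂ) ^ (∑ j : Fin 3, if (j : ℕ) < (i : ℕ) then (Θ j : ℕ) else 0)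

/-- Sign factor (−1)^(θ₁ + ⋯ + θ_i). -/
def sgnUpTo (i : Fin 3) (Θ : WIdx) : ℂ :=
  (-1 : ℂ) ^ (∑ j : Fin 3, if (j : ℕ) ≤ (i : ℕ) then (Θ j : ℕ) else 0)

/-- A_i⁻ e_Θ = θ_i (−1)^(θ₁+⋯+θ_{i−1}) √(p−q(Θ)+1) e_{Θ[θ_i↦0]}. -/
noncomputable def Aminus (p : ℕ) (i : Fin 3) : WV →ₗ[ℂ] WV :=
  bV.constr ℂ fun Θ =>
    (((Θ i : ℕ) : ℂ) * sgnBelow i Θ *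
      ((Real.sqrt ((p : ℝ) - (qv Θ : ℝ) + 1) : ℝ) : ℂ)) • eV (Function.update Θ i 0)

/-- A_i⁺ e_Θ = (1−θ_i) (−1)^(θ₁+⋯+θ_{i−1}) √(p−q(Θ)) e_{Θ[θ_i↦1]}. -/
noncomputable def Aplus (p : ℕ) (i : Fin 3) : WV →ₗ[ℂ] WV :=
  bV.constr ℂ fun Θ =>
    (((1 : ℂ) - ((Θ i : ℕ) : ℂ)) * sgnBelow i Θ *
      ((Real.sqrt ((p : ℝ) - (qv Θ : ℝ)) : ℝ) : ℂ)) • eV (Function.update Θ i 1)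

/-- Anticommutator {X,Y} = XY + YX. -/
noncomputable def acommOp (X Y : WV →ₗ[ℂ] WV) : WV →ₗ[ℂ] WV := X ∘ₗ Y + Y ∘ₗ X

/-- Commutator [X,Y] = XY − YX. -/
noncomputable def commOp (X Y : WV →ₗ[ℂ] WV) : WV →ₗ[ℂ] WV := X ∘ₗ Y - Y ∘ₗ X

/-- Dimensionless Hamiltonian ĥ = Σᵢ {A_i⁺, A_i⁻}. -/
noncomputable def hOp (p : ℕ) : WV →ₗ[ℂ] WV := ∑ i, acommOp (Aplus p i) (Aminus p i)

/-- Position operator r̂_k(t) = e^{−it} A_k⁺ + e^{it} A_k⁻. -/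
noncomputable def rOp (p : ℕ) (k : Fin 3) (t : ℝ) : WV →ₗ[ℂ] WV :=
  Complex.exp (-(t : ℂ) * Complex.I) • Aplus p k +
    Complex.exp ((t : ℂ) * Complex.I) • Aminus p k

/-- Momentum operator p̂_k(t) = −i (e^{−it} A_k⁺ − e^{it} A_k⁻). -/
noncomputable def pOp (p : ℕ) (k : Fin 3) (t : ℝ) : WV →ₗ[ℂ] WV :=
  (-Complex.I) • (Complex.exp (-(t : ℂ) * Complex.I) • Aplus p k -
    Complex.exp ((t : ℂ) * Complex.I) • Aminus p k)

/-- Levi-Civita symbol ε_{jkl} with ε_{123} = 1 (indices 0,1,2 here). -/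
def eps (j k l : Fin 3) : ℂ :=
  if (j, k, l) = (0, 1, 2) ∨ (j, k, l) = (1, 2, 0) ∨ (j, k, l) = (2, 0, 1) then 1
  else if (j, k, l) = (2, 1, 0) ∨ (j, k, l) = (1, 0, 2) ∨ (j, k, l) = (0, 2, 1) then -1
  else 0

/-- Angular momentum M_j = −i Σ_{k,l} ε_{jkl} {A_k⁺, A_l⁻}. -/
noncomputable def Mop (p : ℕ) (j : Fin 3) : WV →ₗ[ℂ] WV :=
  (-Complex.I) • ∑ k, ∑ l, eps j k l • acommOp (Aplus p k) (Aminus p l)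

/-- Eigenvectors v_k(Θ,t) of the position operator r̂_k(t). -/
noncomputable def vVec (k : Fin 3) (t : ℝ) (Θ : WIdx) : WV :=
  (((Real.sqrt 2)⁻¹ : ℝ) : ℂ) •
    (eV (Function.update Θ k 0) +
      (sgnUpTo k Θ * Complex.exp (-(t : ℂ) * Complex.I)) • eV (Function.update Θ k 1))

/-- Eigenvectors ṽ_k(Θ,t) of the momentum operator p̂_k(t). -/
noncomputable def vTilde (k : Fin 3) (t : ℝ) (Θ : WIdx) : WV :=
  (((Real.sqrt 2)⁻¹ : ℝ) : ℂ) •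
    (eV (Function.update Θ k 0) -
      (Complex.I * sgnUpTo k Θ * Complex.exp (-(t : ℂ) * Complex.I)) • eV (Function.update Θ k 1))

/-- The non-stationary state z = (1/√2)(e_{(0,0,0)} + e_{(0,0,1)}). -/
noncomputable def zState : WV :=
  (((Real.sqrt 2)⁻¹ : ℝ) : ℂ) • (eV ![0, 0, 0] + eV ![0, 0, 1])

/-- The state x₁ = (1/√2)(e_{(0,1,0)} + e_{(1,1,0)}). -/
noncomputable def x1State : WV :=
  (((Real.sqrt 2)⁻¹ : ℝ) : ℂ) • (eV ![0, 1, 0] + eV ![1, 1, 0])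

local notation "⟪" x ", " y "⟫" => @inner ℂ _ _ x y

/-!
The operator `hOp p = Σᵢ {Aᵢ⁺, Aᵢ⁻}` is diagonal in the basis `e_Θ`: on `e_Θ` exactly one of
`Aᵢ⁺Aᵢ⁻`, `Aᵢ⁻Aᵢ⁺` survives and returns `p - q(Θ) + θᵢ`, so `hOp p e_Θ = (3p - 2q(Θ)) e_Θ`.
Since `A_k⁺` raises `q` by one and `A_k⁻` lowers it by one, commuting them with a diagonal
operator whose eigenvalue drops by `2` per unit of `q` multiplies them by `∓2`.
-/

theorem LinearMap.comp_sub_comp_eq_smul_of_basis {ι R M : Type*} [CommRing R] [AddCommGroup M]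
    [Module R M] (b : Module.Basis ι R M) {H X : M →ₗ[R] M} (f c : ι → R) (σ : ι → ι) (μ : R)
    (hH : ∀ i, H (b i) = f i • b i) (hX : ∀ i, X (b i) = c i • b (σ i))
    (hshift : ∀ i, c i ≠ 0 → f (σ i) = f i + μ) :
    H ∘ₗ X - X ∘ₗ H = μ • X := by
  refine b.ext fun i => ?_
  simp only [LinearMap.sub_apply, LinearMap.comp_apply, LinearMap.smul_apply, hH, hX,
    map_smul, smul_smul]
  rw [← sub_smul]
  by_cases hc : c i = 0
  · simp [hc]
  · rw [hshift i hc]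
    congr 1
    ring

theorem sum_commOp_left {ι : Type*} (s : Finset ι) (Y : ι → WV →ₗ[ℂ] WV) (X : WV →ₗ[ℂ] WV) :
    ∑ i ∈ s, commOp (Y i) X = commOp (∑ i ∈ s, Y i) X := by
  ext v
  simp only [commOp, LinearMap.sum_apply, LinearMap.sub_apply, LinearMap.comp_apply, map_sum,
    Finset.sum_sub_distrib]

theorem bV_apply (Θ : WIdx) : bV Θ = eV Θ := by
  simp [bV, eV, EuclideanSpace.basisFun_apply]

theorem Aplus_eV (p : ℕ) (i : Fin 3) (Θ : WIdx) :
    Aplus p i (eV Θ) =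
      (((1 : ℂ) - ((Θ i : ℕ) : ℂ)) * sgnBelow i Θ *
        ((Real.sqrt ((p : ℝ) - (qv Θ : ℝ)) : ℝ) : ℂ)) • eV (Function.update Θ i 1) := by
  rw [← bV_apply, Aplus, Module.Basis.constr_basis]

theorem Aminus_eV (p : ℕ) (i : Fin 3) (Θ : WIdx) :
    Aminus p i (eV Θ) =
      (((Θ i : ℕ) : ℂ) * sgnBelow i Θ *
        ((Real.sqrt ((p : ℝ) - (qv Θ : ℝ) + 1) : ℝ) : ℂ)) • eV (Function.update Θ i 0) := by
  rw [← bV_apply, Aminus, Module.Basis.constr_basis]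

theorem qv_le_three (Θ : WIdx) : qv Θ ≤ 3 := by
  calc qv Θ ≤ ∑ _j : Fin 3, 1 := Finset.sum_le_sum fun j _ => Nat.lt_succ_iff.mp (Θ j).isLt
    _ = 3 := by simp

theorem qv_update_add (Θ : WIdx) (i : Fin 3) (c : Fin 2) :
    qv (Function.update Θ i c) + (Θ i : ℕ) = qv Θ + (c : ℕ) := by
  simp only [qv, ← Finset.add_sum_erase _ _ (Finset.mem_univ i), Function.update_self]
  rw [Finset.sum_congr rfl fun j hj => by
    rw [Function.update_of_ne (Finset.ne_of_mem_erase hj)]]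
  ring

theorem qv_update_one {Θ : WIdx} {i : Fin 3} (hi : Θ i = 0) :
    qv (Function.update Θ i 1) = qv Θ + 1 := by
  simpa [hi] using qv_update_add Θ i 1

theorem qv_update_zero {Θ : WIdx} {i : Fin 3} (hi : Θ i = 1) :
    qv (Function.update Θ i 0) + 1 = qv Θ := by
  simpa [hi] using qv_update_add Θ i 0

theorem sgnBelow_update (i : Fin 3) (Θ : WIdx) (c : Fin 2) :
    sgnBelow i (Function.update Θ i c) = sgnBelow i Θ := by
  unfold sgnBelow
  congr 1
  refine Finset.sum_congr rfl fun j _ => ?_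
  by_cases h : (j : ℕ) < (i : ℕ)
  · have hne : j ≠ i := fun e => by subst e; omega
    simp [h, Function.update_of_ne hne]
  · simp [h]

theorem sgnBelow_mul_self (i : Fin 3) (Θ : WIdx) : sgnBelow i Θ * sgnBelow i Θ = 1 := by
  rw [sgnBelow, ← pow_add]
  exact Even.neg_one_pow ⟨_, rfl⟩

theorem ofReal_sqrt_mul_self {x : ℝ} (hx : 0 ≤ x) :
    ((Real.sqrt x : ℝ) : ℂ) * ((Real.sqrt x : ℝ) : ℂ) = (x : ℂ) := by
  rw [← Complex.ofReal_mul, Real.mul_self_sqrt hx]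

theorem Aplus_eV_of_eq_one (p : ℕ) {i : Fin 3} {Θ : WIdx} (hi : Θ i = 1) :
    Aplus p i (eV Θ) = 0 := by
  simp [Aplus_eV, hi]

theorem Aminus_eV_of_eq_zero (p : ℕ) {i : Fin 3} {Θ : WIdx} (hi : Θ i = 0) :
    Aminus p i (eV Θ) = 0 := by
  simp [Aminus_eV, hi]

theorem Aminus_Aplus_eV {p : ℕ} {i : Fin 3} {Θ : WIdx} (hi : Θ i = 0) (hq : qv Θ ≤ p) :
    Aminus p i (Aplus p i (eV Θ)) = ((p : ℂ) - qv Θ) • eV Θ := by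
  have hnn : (0 : ℝ) ≤ p - qv Θ := sub_nonneg.mpr (by exact_mod_cast hq)
  have hupd : Function.update (Function.update Θ i 1) i 0 = Θ := by
    rw [Function.update_idem, ← hi, Function.update_eq_self]
  rw [Aplus_eV, map_smul, Aminus_eV, hupd, smul_smul, qv_update_one hi, sgnBelow_update]
  congr 1
  simp only [hi, Function.update_self, Fin.val_zero, Fin.val_one, Nat.cast_zero, Nat.cast_one,
    sub_zero, one_mul, Nat.cast_add, sub_add_eq_sub_sub, sub_add_cancel]
  have hsq := ofReal_sqrt_mul_self hnn
  push_cast at hsq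
  linear_combination (Real.sqrt (p - qv Θ) * Real.sqrt (p - qv Θ) : ℂ) *
      sgnBelow_mul_self i Θ + hsq

theorem Aplus_Aminus_eV {p : ℕ} {i : Fin 3} {Θ : WIdx} (hi : Θ i = 1) (hq : qv Θ ≤ p + 1) :
    Aplus p i (Aminus p i (eV Θ)) = ((p : ℂ) - qv Θ + 1) • eV Θ := by
  have hnn : (0 : ℝ) ≤ p - qv Θ + 1 := by
    have : (qv Θ : ℝ) ≤ p + 1 := by exact_mod_cast hq
    linarith
  have hupd : Function.update (Function.update Θ i 0) i 1 = Θ := by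
    rw [Function.update_idem, ← hi, Function.update_eq_self]
  have hq' : (qv (Function.update Θ i 0) : ℝ) = qv Θ - 1 := by
    rw [← qv_update_zero hi]; push_cast; ring
  rw [Aminus_eV, map_smul, Aplus_eV, hupd, smul_smul, hq', sgnBelow_update]
  congr 1
  simp only [hi, Function.update_self, Fin.val_zero, Fin.val_one, Nat.cast_zero, Nat.cast_one,
    sub_zero, one_mul, sub_sub_eq_add_sub, add_sub_right_comm]
  have hsq := ofReal_sqrt_mul_self hnn
  push_cast at hsq
  linear_combination (Real.sqrt (p - qv Θ + 1) * Real.sqrt (p - qv Θ + 1) : ℂ) *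
      sgnBelow_mul_self i Θ + hsq

theorem acommOp_Aplus_Aminus_eV {p : ℕ} (i : Fin 3) {Θ : WIdx} (hq : qv Θ ≤ p) :
    acommOp (Aplus p i) (Aminus p i) (eV Θ) = ((p : ℂ) - qv Θ + (Θ i : ℕ)) • eV Θ := by
  simp only [acommOp, LinearMap.add_apply, LinearMap.comp_apply]
  by_cases hi : Θ i = 0
  · rw [Aminus_eV_of_eq_zero p hi, map_zero, Aminus_Aplus_eV hi hq, hi]
    simp
  · replace hi := Fin.eq_one_of_ne_zero _ hi
    rw [Aplus_eV_of_eq_one p hi, map_zero, Aplus_Aminus_eV hi (by omega), hi]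
    simp

theorem hOp_eV {p : ℕ} (hp : 3 ≤ p) (Θ : WIdx) :
    hOp p (eV Θ) = (3 * (p : ℂ) - 2 * qv Θ) • eV Θ := by
  have hq : qv Θ ≤ p := (qv_le_three Θ).trans hp
  simp only [hOp, LinearMap.sum_apply, acommOp_Aplus_Aminus_eV _ hq, ← Finset.sum_smul]
  congr 1
  simp only [Finset.sum_add_distrib, Finset.sum_const, Finset.card_univ, Fintype.card_fin, qv]
  push_cast
  ring

/-- Σᵢ [{A_i⁺, A_i⁻}, A_k⁺] = −2 A_k⁺ and Σᵢ [{A_i⁺, A_i⁻}, A_k⁻] = +2 A_k⁻. -/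
theorem stmt3 (p : ℕ) (hp : 3 ≤ p) (k : Fin 3) :
    (∑ i : Fin 3, commOp (acommOp (Aplus p i) (Aminus p i)) (Aplus p k)) =
      (-2 : ℂ) • Aplus p k ∧
    (∑ i : Fin 3, commOp (acommOp (Aplus p i) (Aminus p i)) (Aminus p k)) =
      (2 : ℂ) • Aminus p k := by
  rw [sum_commOp_left, sum_commOp_left]
  constructor
  · refine LinearMap.comp_sub_comp_eq_smul_of_basis bV (fun Θ => 3 * (p : ℂ) - 2 * qv Θ) _
      (Function.update · k 1) _ (fun Θ => by rw [bV_apply]; exact hOp_eV hp Θ)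
      (fun Θ => by rw [bV_apply, bV_apply]; exact Aplus_eV p k Θ) fun Θ hc => ?_
    have hk : Θ k = 0 := by
      by_contra hk
      exact hc (by simp [Fin.eq_one_of_ne_zero _ hk])
    simp only [qv_update_one hk]
    push_cast
    ring
  · refine LinearMap.comp_sub_comp_eq_smul_of_basis bV (fun Θ => 3 * (p : ℂ) - 2 * qv Θ) _
      (Function.update · k 0) _ (fun Θ => by rw [bV_apply]; exact hOp_eV hp Θ)
      (fun Θ => by rw [bV_apply, bV_apply]; exact Aminus_eV p k Θ) fun Θ hc => ?_
    have hk : Θ k = 1 := Fin.eq_one_of_ne_zero _ fun hk => hc (by simp [hk])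
    simp only [← qv_update_zero hk]
    push_cast
    ring
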